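/- arXiv:1808.05647 — 2 statements merged into one kernel-verified Lean document; each statement's English description precedes it below -/
import Mathlib

section
/- Let f, g : {-1,1}^n → {-1,1} be two Boolean functions whose Fourier expansions have, respectively, l₁ and l₂ nonzero terms (i.e., f has exactly l₁ subsets S with f̂(S) ≠ 0 and g has exactly l₂ such subsets), let t ∈ {1,...,n} and ε ≥ 0. If both Inf_t[f] ≤ ε and Inf_t[g] ≤ ε, then Inf_t[f·g] ≤ 4 ε l, where l = l₁ l₂ and f·g is the pointwise product. -/
open Finset

/-- The embedding of the Boolean cube `{-1,1}^n` into `ℝ^n`. -/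
noncomputable def chi {n : ℕ} (x : Fin n → Bool) : Fin n → ℝ :=
  fun i => if x i then 1 else -1

/-- Expectation of `f` over a uniformly random point of `{-1,1}^n`. -/
noncomputable def expect {n : ℕ} (f : (Fin n → Bool) → ℝ) : ℝ :=
  (∑ x : Fin n → Bool, f x) / 2 ^ n

/-- The Fourier coefficient `f̂(S) = E_x[f(x) ∏_{i ∈ S} x_i]`. -/
noncomputable def fhat {n : ℕ} (f : (Fin n → Bool) → ℝ) (S : Finset (Fin n)) : ℝ :=
  expect fun x => f x * ∏ i ∈ S, chi x i

/-- The influence of coordinate `t` on `f`: `Inf_t[f] = ∑_{S ∋ t} f̂(S)²`. -/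
noncomputable def influence {n : ℕ} (f : (Fin n → Bool) → ℝ) (t : Fin n) : ℝ :=
  ∑ S ∈ univ.filter (fun S : Finset (Fin n) => t ∈ S), (fhat f S) ^ 2

/-- The variance of `f` over a uniformly random point of `{-1,1}^n`:
`Var[f] = E[f²] - (E[f])²`. -/
noncomputable def variance {n : ℕ} (f : (Fin n → Bool) → ℝ) : ℝ :=
  expect (fun x => f x ^ 2) - (expect f) ^ 2

/-!
With `∂ₜf(x) = (f(x) - f(x ⊕ eₜ)) / 2`, the Fourier expansion of `∂ₜf` keeps exactly the terms
of `f` whose set contains `t`, so Parseval gives `Inf_t[f] = E[(∂ₜf)²]`. The Leibniz rule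
`∂ₜ(fg)(x) = ∂ₜf(x) g(x) + f(x ⊕ eₜ) ∂ₜg(x)` and `(a + b)² ≤ 2a² + 2b²` give
`Inf_t[fg] ≤ 2 Inf_t[f] + 2 Inf_t[g] ≤ 4ε` as soon as `|f|, |g| ≤ 1`. Finally `l₁ l₂ ≥ 1`,
since by Parseval a nonzero function has a nonzero Fourier coefficient.
-/

section
variable {n : ℕ}

theorem chi_mul_chi_add_one (x y : Fin n → Bool) (i : Fin n) :
    chi x i * chi y i + 1 = if x i = y i then 2 else 0 := by
  unfold chi; cases x i <;> cases y i <;> norm_num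

theorem sum_prod_chi_mul_chi (x y : Fin n → Bool) :
    ∑ S : Finset (Fin n), ∏ i ∈ S, chi x i * chi y i = if x = y then 2 ^ n else 0 := by
  rw [← powerset_univ, ← prod_add_one]
  simp only [chi_mul_chi_add_one, prod_ite_zero, prod_const, card_univ, Fintype.card_fin,
    mem_univ, true_imp_iff, funext_iff]

theorem sum_fhat_mul_fhat (f g : (Fin n → Bool) → ℝ) :
    ∑ S, fhat f S * fhat g S = _root_.expect fun x => f x * g x := by
  have hS : ∀ S, fhat f S * fhat g S =
      (∑ x, ∑ y, f x * g y * ∏ i ∈ S, chi x i * chi y i) / (2 ^ n * 2 ^ n) := by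
    intro S
    simp only [fhat, _root_.expect, div_mul_div_comm, sum_mul_sum, prod_mul_distrib]
    congr 1
    exact sum_congr rfl fun x _ => sum_congr rfl fun y _ => by ring
  calc ∑ S, fhat f S * fhat g S
      = (∑ x, ∑ y, f x * g y * ∑ S : Finset (Fin n), ∏ i ∈ S, chi x i * chi y i) /
          (2 ^ n * 2 ^ n) := by
        simp only [hS, ← sum_div, mul_sum]
        rw [sum_comm]
        exact congrArg (· / _) (sum_congr rfl fun x _ => sum_comm)
    _ = (∑ x, f x * g x) / 2 ^ n := by
        simp only [sum_prod_chi_mul_chi, mul_ite, mul_zero, sum_ite_eq, mem_univ, if_true,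
          ← sum_mul]
        field_simp
    _ = _ := rfl

def flipCoord (t : Fin n) (x : Fin n → Bool) : Fin n → Bool :=
  Function.update x t (!x t)

theorem flipCoord_involutive (t : Fin n) : Function.Involutive (flipCoord t) := by
  intro x
  simp [flipCoord]

theorem chi_flipCoord (t : Fin n) (x : Fin n → Bool) :
    chi (flipCoord t x) = Function.update (chi x) t (-chi x t) := by
  funext i
  rcases eq_or_ne i t with rfl | hi
  · simp only [flipCoord, chi, Function.update_self]
    cases x i <;> norm_num
  · simp [flipCoord, chi, hi]

theorem prod_chi_flipCoord (t : Fin n) (x : Fin n → Bool) (S : Finset (Fin n)) :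
    ∏ i ∈ S, chi (flipCoord t x) i = (if t ∈ S then -1 else 1) * ∏ i ∈ S, chi x i := by
  rw [chi_flipCoord]
  split_ifs with ht
  · rw [prod_update_of_mem ht, ← mul_prod_erase S _ ht, sdiff_singleton_eq_erase]
    ring
  · rw [prod_update_of_notMem ht, one_mul]

theorem fhat_comp_flipCoord (t : Fin n) (f : (Fin n → Bool) → ℝ) (S : Finset (Fin n)) :
    fhat (fun x => f (flipCoord t x)) S = (if t ∈ S then -1 else 1) * fhat f S := by
  have hsum : ∑ x, f (flipCoord t x) * ∏ i ∈ S, chi x i =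
      ∑ x, f x * ∏ i ∈ S, chi (flipCoord t x) i := by
    rw [← (flipCoord_involutive t).bijective.sum_comp fun x =>
      f x * ∏ i ∈ S, chi (flipCoord t x) i]
    simp only [flipCoord_involutive t _]
  simp only [fhat, _root_.expect, hsum, prod_chi_flipCoord, mul_left_comm (f _), ← mul_sum,
    mul_div_assoc]

noncomputable def coordDeriv (t : Fin n) (f : (Fin n → Bool) → ℝ) (x : Fin n → Bool) : ℝ :=
  (f x - f (flipCoord t x)) / 2

theorem fhat_coordDeriv (t : Fin n) (f : (Fin n → Bool) → ℝ) (S : Finset (Fin n)) :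
    fhat (coordDeriv t f) S = if t ∈ S then fhat f S else 0 := by
  have hlin : fhat (coordDeriv t f) S = (fhat f S - fhat (fun x => f (flipCoord t x)) S) / 2 := by
    simp only [fhat, _root_.expect, coordDeriv, div_mul_eq_mul_div, sub_mul, ← sum_div,
      sum_sub_distrib]
    ring
  rw [hlin, fhat_comp_flipCoord]
  split_ifs <;> ring

theorem influence_eq_expect_sq_coordDeriv (f : (Fin n → Bool) → ℝ) (t : Fin n) :
    influence f t = _root_.expect fun x => coordDeriv t f x ^ 2 := by
  simp only [sq, ← sum_fhat_mul_fhat, influence, sum_filter]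
  refine sum_congr rfl fun S _ => ?_
  rw [fhat_coordDeriv]
  split_ifs <;> ring

theorem coordDeriv_mul (t : Fin n) (f g : (Fin n → Bool) → ℝ) (x : Fin n → Bool) :
    coordDeriv t (fun x => f x * g x) x =
      coordDeriv t f x * g x + f (flipCoord t x) * coordDeriv t g x := by
  simp only [coordDeriv]
  ring

theorem sq_coordDeriv_mul_le {f g : (Fin n → Bool) → ℝ} (hf : ∀ x, |f x| ≤ 1)
    (hg : ∀ x, |g x| ≤ 1) (t : Fin n) (x : Fin n → Bool) :
    coordDeriv t (fun x => f x * g x) x ^ 2 ≤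
      2 * coordDeriv t f x ^ 2 + 2 * coordDeriv t g x ^ 2 := by
  have hf' : f (flipCoord t x) ^ 2 ≤ 1 := sq_le_one_iff_abs_le_one _ |>.2 (hf _)
  have hg' : g x ^ 2 ≤ 1 := sq_le_one_iff_abs_le_one _ |>.2 (hg x)
  calc coordDeriv t (fun x => f x * g x) x ^ 2
      ≤ 2 * ((coordDeriv t f x * g x) ^ 2 + (f (flipCoord t x) * coordDeriv t g x) ^ 2) := by
        rw [coordDeriv_mul]
        exact add_sq_le
    _ ≤ 2 * coordDeriv t f x ^ 2 + 2 * coordDeriv t g x ^ 2 := by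
        rw [mul_pow, mul_pow]
        nlinarith [mul_le_of_le_one_right (sq_nonneg (coordDeriv t f x)) hg',
          mul_le_of_le_one_left (sq_nonneg (coordDeriv t g x)) hf']

theorem expect_mono {a b : (Fin n → Bool) → ℝ} (h : ∀ x, a x ≤ b x) :
    _root_.expect a ≤ _root_.expect b :=
  div_le_div_of_nonneg_right (sum_le_sum fun x _ => h x) (by positivity)

theorem influence_mul_le_two_mul_add {f g : (Fin n → Bool) → ℝ} (hf : ∀ x, |f x| ≤ 1)
    (hg : ∀ x, |g x| ≤ 1) (t : Fin n) :
    influence (fun x => f x * g x) t ≤ 2 * influence f t + 2 * influence g t := by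
  simp only [influence_eq_expect_sq_coordDeriv]
  calc _ ≤ _root_.expect (fun x => 2 * coordDeriv t f x ^ 2 + 2 * coordDeriv t g x ^ 2) :=
        expect_mono (sq_coordDeriv_mul_le hf hg t)
    _ = _ := by
        simp only [_root_.expect, sum_add_distrib, ← mul_sum]
        ring

theorem card_filter_fhat_ne_zero_pos {f : (Fin n → Bool) → ℝ} {x₀ : Fin n → Bool}
    (hx₀ : f x₀ ≠ 0) : 0 < (univ.filter fun S : Finset (Fin n) => fhat f S ≠ 0).card := by
  refine card_pos.2 (filter_nonempty_iff.2 ?_)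
  by_contra! hzero
  have hsum : ∑ x, f x * f x = 0 := by
    have := sum_fhat_mul_fhat f f
    simp only [hzero, mem_univ, mul_zero, sum_const_zero, _root_.expect] at this
    exact (div_eq_zero_iff.1 this.symm).resolve_right (by positivity)
  have := (sum_eq_zero_iff_of_nonneg fun x _ => mul_self_nonneg (f x)).1 hsum x₀ (mem_univ _)
  exact hx₀ (mul_self_eq_zero.1 this)

end

/-- If `f, g : {-1,1}^n → {-1,1}` have `l₁` and `l₂` nonzero Fourier terms
respectively, and `Inf_t[f] ≤ ε`, `Inf_t[g] ≤ ε`, then `Inf_t[f·g] ≤ 4 ε l`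
where `l = l₁ l₂`. -/
theorem influence_mul_le (n : ℕ) (f g : (Fin n → Bool) → ℝ)
    (hfb : ∀ x, f x = 1 ∨ f x = -1) (hgb : ∀ x, g x = 1 ∨ g x = -1)
    (l₁ l₂ : ℕ)
    (hl₁ : (univ.filter fun S : Finset (Fin n) => fhat f S ≠ 0).card = l₁)
    (hl₂ : (univ.filter fun S : Finset (Fin n) => fhat g S ≠ 0).card = l₂)
    (t : Fin n) (ε : ℝ) (hε : 0 ≤ ε)
    (hf : influence f t ≤ ε) (hg : influence g t ≤ ε) :
    influence (fun x => f x * g x) t ≤ 4 * ε * (l₁ * l₂ : ℕ) := by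
  have hf₁ : ∀ x, |f x| ≤ 1 := fun x => by rcases hfb x with h | h <;> simp [h]
  have hg₁ : ∀ x, |g x| ≤ 1 := fun x => by rcases hgb x with h | h <;> simp [h]
  have hl₁_pos : 0 < l₁ := hl₁ ▸ card_filter_fhat_ne_zero_pos (x₀ := fun _ => true)
    (by rcases hfb fun _ => true with h | h <;> simp [h])
  have hl₂_pos : 0 < l₂ := hl₂ ▸ card_filter_fhat_ne_zero_pos (x₀ := fun _ => true)
    (by rcases hgb fun _ => true with h | h <;> simp [h])
  have hl : (1 : ℝ) ≤ (l₁ * l₂ : ℕ) := by exact_mod_cast Nat.mul_pos hl₁_pos hl₂_pos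
  calc influence (fun x => f x * g x) t ≤ 2 * influence f t + 2 * influence g t :=
        influence_mul_le_two_mul_add hf₁ hg₁ t
    _ ≤ 4 * ε := by linarith
    _ ≤ 4 * ε * (l₁ * l₂ : ℕ) := le_mul_of_one_le_right (by positivity) hl
end

section
/- Let f, g : {-1,1}^n → {-1,1} be Boolean functions whose Fourier expansions have l₁ and l₂ nonzero terms respectively, let t ∈ {1,...,n} with Inf_t[f] ≤ ε, and write f(x) = x_t·q^f(x) + r^f(x) and g(x) = x_t·q^g(x) + r^g(x) with q^f, r^f, q^g, r^g multilinear polynomials not depending on x_t. Then the multilinear polynomial x_t·q^f(x)·r^g(x) satisfies Inf_t[x_t·q^f·r^g] ≤ l·ε, where l = l₁ l₂. -/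
open Finset

/-- The quotient part of the decomposition `h = x_t·q + r`:
`q(x) = ∑_{S ∋ t} ĥ(S) ∏_{i ∈ S, i ≠ t} x_i`. -/
noncomputable def qpart {n : ℕ} (h : (Fin n → Bool) → ℝ) (t : Fin n) :
    (Fin n → Bool) → ℝ :=
  fun x => ∑ S ∈ univ.filter (fun S : Finset (Fin n) => t ∈ S),
    fhat h S * ∏ i ∈ S.erase t, chi x i

/-- The remainder part of the decomposition `h = x_t·q + r`:
`r(x) = ∑_{S ∌ t} ĥ(S) ∏_{i ∈ S} x_i`. -/
noncomputable def rpart {n : ℕ} (h : (Fin n → Bool) → ℝ) (t : Fin n) :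
    (Fin n → Bool) → ℝ :=
  fun x => ∑ S ∈ univ.filter (fun S : Finset (Fin n) => t ∉ S),
    fhat h S * ∏ i ∈ S, chi x i

/-!
Negating the `t`-th coordinate turns `h = x_t·q + r` into `-x_t·q + r`, so `r` is the average
of `h` and its flip and `x_t·q` is half their difference. Hence `|r^g| ≤ 1` for Boolean `g`, and
`x_t·q^f` has exactly the Fourier coefficients of `f` on the sets containing `t`. With Parseval,
`Inf_t[x_t·q^f·r^g] ≤ E[(x_t·q^f·r^g)²] ≤ E[(x_t·q^f)²] = Inf_t[f] ≤ ε`, and `l₁ l₂ ≥ 1` because a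
Boolean function has total Fourier weight `1`.
-/

section

variable {n : ℕ}

def flipAt (t : Fin n) (x : Fin n → Bool) : Fin n → Bool :=
  Function.update x t (!x t)

lemma flipAt_involutive (t : Fin n) : Function.Involutive (flipAt t) := by
  intro x
  simp [flipAt]

lemma chi_flipAt_self (t : Fin n) (x : Fin n → Bool) : chi (flipAt t x) t = -chi x t := by
  unfold chi flipAt
  cases x t <;> simp

lemma chi_flipAt_of_ne {t i : Fin n} (hi : i ≠ t) (x : Fin n → Bool) :
    chi (flipAt t x) i = chi x i := by
  simp [chi, flipAt, Function.update_of_ne hi]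

lemma prod_chi_flipAt_of_notMem {t : Fin n} {S : Finset (Fin n)} (ht : t ∉ S)
    (x : Fin n → Bool) : ∏ i ∈ S, chi (flipAt t x) i = ∏ i ∈ S, chi x i :=
  prod_congr rfl fun _ hi => chi_flipAt_of_ne (ne_of_mem_of_not_mem hi ht) x

lemma prod_chi_flipAt (t : Fin n) (S : Finset (Fin n)) (x : Fin n → Bool) :
    ∏ i ∈ S, chi (flipAt t x) i = if t ∈ S then -∏ i ∈ S, chi x i else ∏ i ∈ S, chi x i := by
  split_ifs with ht
  · rw [← mul_prod_erase S _ ht, ← mul_prod_erase S _ ht, chi_flipAt_self,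
      prod_chi_flipAt_of_notMem (notMem_erase t S), neg_mul]
  · exact prod_chi_flipAt_of_notMem ht x

lemma fhat_comp_flipAt (h : (Fin n → Bool) → ℝ) (t : Fin n) (S : Finset (Fin n)) :
    fhat (fun x => h (flipAt t x)) S = if t ∈ S then -fhat h S else fhat h S := by
  have hsum : ∑ x, h (flipAt t x) * ∏ i ∈ S, chi x i
      = ∑ x, h x * ∏ i ∈ S, chi (flipAt t x) i := by
    refine Fintype.sum_equiv (flipAt_involutive t).toPerm _ _ fun x => ?_
    simp [flipAt_involutive t x]
  unfold fhat _root_.expect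
  rw [hsum]
  split_ifs with ht <;> simp [prod_chi_flipAt, ht, sum_neg_distrib, neg_div]

lemma sum_prod_chi_mul_prod_chi (x y : Fin n → Bool) :
    ∑ S : Finset (Fin n), (∏ i ∈ S, chi x i) * ∏ i ∈ S, chi y i
      = if x = y then 2 ^ n else 0 := by
  have hfactor : ∀ i, 1 + chi x i * chi y i = if x i = y i then 2 else 0 := by
    intro i; unfold chi; cases x i <;> cases y i <;> norm_num
  simp_rw [← prod_mul_distrib]
  rw [← powerset_univ, ← prod_one_add]
  simp_rw [hfactor, prod_ite_zero, mem_univ, true_implies, funext_iff, prod_const, card_univ,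
    Fintype.card_fin]

lemma sum_fhat_mul_prod_chi (h : (Fin n → Bool) → ℝ) (x : Fin n → Bool) :
    ∑ S, fhat h S * ∏ i ∈ S, chi x i = h x := by
  have hterm : ∀ S : Finset (Fin n), fhat h S * ∏ i ∈ S, chi x i
      = (∑ y, h y * ((∏ i ∈ S, chi y i) * ∏ i ∈ S, chi x i)) / 2 ^ n := by
    intro S
    simp only [fhat, _root_.expect, div_mul_eq_mul_div, sum_mul, mul_assoc]
  rw [sum_congr rfl fun S _ => hterm S, ← sum_div, sum_comm]
  simp_rw [← mul_sum, sum_prod_chi_mul_prod_chi]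
  simp

lemma sum_fhat_sq (h : (Fin n → Bool) → ℝ) :
    ∑ S, fhat h S ^ 2 = expect fun x => h x ^ 2 := by
  have hexpand : (fun x => h x ^ 2) = fun x => ∑ S, fhat h S * (h x * ∏ i ∈ S, chi x i) := by
    funext x
    simp_rw [mul_left_comm _ (h x), ← mul_sum, sum_fhat_mul_prod_chi, sq]
  rw [hexpand]
  unfold _root_.expect
  rw [sum_comm, sum_div]
  simp_rw [← mul_sum, mul_div_assoc, sq]
  rfl

lemma expect_le_expect {f g : (Fin n → Bool) → ℝ} (hfg : ∀ x, f x ≤ g x) : expect f ≤ expect g :=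
  div_le_div_of_nonneg_right (sum_le_sum fun x _ => hfg x) (by positivity)

lemma expect_const (c : ℝ) : expect (fun _ : Fin n → Bool => c) = c := by
  simp [_root_.expect]

lemma influence_le_expect_sq (h : (Fin n → Bool) → ℝ) (t : Fin n) :
    influence h t ≤ expect fun x => h x ^ 2 := by
  rw [← sum_fhat_sq]
  exact sum_le_sum_of_subset_of_nonneg (subset_univ _) fun _ _ _ => sq_nonneg _

lemma chi_mul_qpart_add_rpart (h : (Fin n → Bool) → ℝ) (t : Fin n) (x : Fin n → Bool) :
    chi x t * qpart h t x + rpart h t x = h x := by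
  have hq : chi x t * qpart h t x = ∑ S with t ∈ S, fhat h S * ∏ i ∈ S, chi x i := by
    rw [qpart, mul_sum]
    refine sum_congr rfl fun S hS => ?_
    rw [← mul_prod_erase S _ (mem_filter.mp hS).2]
    ring
  rw [hq, rpart, sum_filter_add_sum_filter_not, sum_fhat_mul_prod_chi]

lemma qpart_flipAt (h : (Fin n → Bool) → ℝ) (t : Fin n) (x : Fin n → Bool) :
    qpart h t (flipAt t x) = qpart h t x := by
  simp only [qpart, prod_chi_flipAt_of_notMem (notMem_erase t _)]

lemma rpart_flipAt (h : (Fin n → Bool) → ℝ) (t : Fin n) (x : Fin n → Bool) :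
    rpart h t (flipAt t x) = rpart h t x :=
  sum_congr rfl fun S hS => by rw [prod_chi_flipAt_of_notMem (mem_filter.mp hS).2]

lemma chi_mul_qpart_eq (h : (Fin n → Bool) → ℝ) (t : Fin n) (x : Fin n → Bool) :
    chi x t * qpart h t x = (h x - h (flipAt t x)) / 2 := by
  rw [← chi_mul_qpart_add_rpart h t x, ← chi_mul_qpart_add_rpart h t (flipAt t x),
    chi_flipAt_self, qpart_flipAt, rpart_flipAt]
  ring

lemma rpart_eq (h : (Fin n → Bool) → ℝ) (t : Fin n) (x : Fin n → Bool) :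
    rpart h t x = (h x + h (flipAt t x)) / 2 := by
  rw [← chi_mul_qpart_add_rpart h t x, ← chi_mul_qpart_add_rpart h t (flipAt t x),
    chi_flipAt_self, qpart_flipAt, rpart_flipAt]
  ring

lemma rpart_sq_le_one {h : (Fin n → Bool) → ℝ} (hb : ∀ x, h x = 1 ∨ h x = -1) (t : Fin n)
    (x : Fin n → Bool) : rpart h t x ^ 2 ≤ 1 := by
  rw [rpart_eq]
  rcases hb x with h₁ | h₁ <;> rcases hb (flipAt t x) with h₂ | h₂ <;> rw [h₁, h₂] <;> norm_num

lemma fhat_chi_mul_qpart (h : (Fin n → Bool) → ℝ) (t : Fin n) (S : Finset (Fin n)) :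
    fhat (fun x => chi x t * qpart h t x) S = if t ∈ S then fhat h S else 0 := by
  have hlin : fhat (fun x => chi x t * qpart h t x) S
      = (fhat h S - fhat (fun x => h (flipAt t x)) S) / 2 := by
    simp only [fhat, _root_.expect, chi_mul_qpart_eq, div_mul_eq_mul_div, sub_mul, ← sum_div,
      sum_sub_distrib]
    ring
  rw [hlin, fhat_comp_flipAt]
  split_ifs <;> ring

lemma expect_sq_chi_mul_qpart (h : (Fin n → Bool) → ℝ) (t : Fin n) :
    (expect fun x => (chi x t * qpart h t x) ^ 2) = influence h t := by
  rw [← sum_fhat_sq, influence, sum_filter]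
  simp_rw [fhat_chi_mul_qpart, ite_pow, zero_pow two_ne_zero]

lemma card_fhat_ne_zero_pos {h : (Fin n → Bool) → ℝ} (hb : ∀ x, h x = 1 ∨ h x = -1) :
    0 < (univ.filter fun S : Finset (Fin n) => fhat h S ≠ 0).card := by
  have hsum : ∑ S, fhat h S ^ 2 = 1 := by
    rw [sum_fhat_sq, ← expect_const (n := n) 1]
    congr 1
    funext x
    rcases hb x with hx | hx <;> rw [hx] <;> norm_num
  obtain ⟨S, -, hS⟩ := exists_ne_zero_of_sum_ne_zero (hsum ▸ one_ne_zero)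
  exact card_pos.mpr ⟨S, mem_filter.mpr ⟨mem_univ S, pow_ne_zero_iff two_ne_zero |>.mp hS⟩⟩

end

/-- If `f, g : {-1,1}^n → {-1,1}` have `l₁` and `l₂` nonzero Fourier terms and
`Inf_t[f] ≤ ε`, then writing `f = x_t·q^f + r^f` and `g = x_t·q^g + r^g`, the
polynomial `x_t·q^f·r^g` satisfies `Inf_t[x_t·q^f·r^g] ≤ l ε` with `l = l₁ l₂`. -/
theorem influence_cross_term_le (n : ℕ) (f g : (Fin n → Bool) → ℝ)
    (hfb : ∀ x, f x = 1 ∨ f x = -1) (hgb : ∀ x, g x = 1 ∨ g x = -1)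
    (l₁ l₂ : ℕ)
    (hl₁ : (univ.filter fun S : Finset (Fin n) => fhat f S ≠ 0).card = l₁)
    (hl₂ : (univ.filter fun S : Finset (Fin n) => fhat g S ≠ 0).card = l₂)
    (t : Fin n) (ε : ℝ) (hε : 0 ≤ ε) (hf : influence f t ≤ ε) :
    influence (fun x => chi x t * qpart f t x * rpart g t x) t ≤ (l₁ * l₂ : ℕ) * ε := by
  have hsq : ∀ x, (chi x t * qpart f t x * rpart g t x) ^ 2 ≤ (chi x t * qpart f t x) ^ 2 :=
    fun x => by
      rw [mul_pow]
      exact mul_le_of_le_one_right (sq_nonneg _) (rpart_sq_le_one hgb t x)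
  have hl : (1 : ℝ) ≤ (l₁ * l₂ : ℕ) := by
    rw [← hl₁, ← hl₂]
    exact Nat.one_le_cast.mpr (Nat.mul_pos (card_fhat_ne_zero_pos hfb) (card_fhat_ne_zero_pos hgb))
  calc influence (fun x => chi x t * qpart f t x * rpart g t x) t
      ≤ expect fun x => (chi x t * qpart f t x * rpart g t x) ^ 2 := influence_le_expect_sq _ t
    _ ≤ expect fun x => (chi x t * qpart f t x) ^ 2 := expect_le_expect hsq
    _ = influence f t := expect_sq_chi_mul_qpart f t
    _ ≤ ε := hf
    _ ≤ (l₁ * l₂ : ℕ) * ε := le_mul_of_one_le_left hε hl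
end
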